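/- Let Z be a special symbol of defect 1 and size (m+1,m) and Z' a special symbol of defect 0 and size (m',m') with m' = m or m' = m+1, and suppose D_{Z,Z'} ≠ ∅. Let Ψ = {a_k, b_l} be a consecutive pair in Z_I (so l = k or l = k−1). Then (Λ_Ψ, Z') ∈ D_{Z,Z'} if and only if: c_k ≥ a_k and b_k > d_k, when m' = m and l = k; a_k > c_k and d_{k−1} ≥ b_{k−1}, when m' = m and l = k−1; c_k > a_k and b_k ≥ d_k, when m' = m+1 and l = k; a_k ≥ c_k and d_{k−1} > b_{k−1}, when m' = m+1 and l = k−1. (Here a_i, b_i are the rows of Z and c_i, d_i the rows of Z'.) -/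

import Mathlib

open scoped symmDiff

/-- A symbol: a pair of finsets of naturals (its two rows, each read in
strictly decreasing order). -/
abbrev Symb :=  Finset ℕ × Finset ℕ

/-- The strictly decreasing enumeration of a finset of naturals. -/
def rowList (s : Finset ℕ) : List ℕ := (s.sort (· ≤ ·)).reverse

/-- The `i`-th entry (0-based) of the strictly decreasing enumeration of `s`. -/
def ent (s : Finset ℕ) (i : ℕ) : Option ℕ := (rowList s)[i]?

/-- Impose a relation on two optional entries whenever both exist. -/
def oRel (r : ℕ → ℕ → Prop) : Option ℕ → Option ℕ → Prop
  | some x, some y => r x y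
  | _, _ => True

/-- `Z` is a special symbol of defect 1 and size `(m+1, m)`. -/
def IsSpecial1 (Z : Symb) (m : ℕ) : Prop :=
  Z.1.card = m + 1 ∧ Z.2.card = m ∧
  (∀ i, oRel (· ≥ ·) (ent Z.1 i) (ent Z.2 i)) ∧
  (∀ i, oRel (· ≥ ·) (ent Z.2 i) (ent Z.1 (i + 1)))

/-- `Z'` is a special symbol of defect 0 and size `(m', m')`. -/
def IsSpecial0 (Z : Symb) (m' : ℕ) : Prop :=
  Z.1.card = m' ∧ Z.2.card = m' ∧
  (∀ i, oRel (· ≥ ·) (ent Z.1 i) (ent Z.2 i)) ∧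
  (∀ i, oRel (· ≥ ·) (ent Z.2 i) (ent Z.1 (i + 1)))

/-- `Z_I`: the entries of `Z` lying in exactly one row (row remembered). -/
def ZI (Z : Symb) : Symb := (Z.1 \ Z.2, Z.2 \ Z.1)

/-- `M` is a subset of `Z_I`. -/
def SubZI (M Z : Symb) : Prop := M.1 ⊆ Z.1 \ Z.2 ∧ M.2 ⊆ Z.2 \ Z.1

/-- `Z` is regular: no degenerate entries. -/
def Regular (Z : Symb) : Prop := Disjoint Z.1 Z.2

/-- `Λ_M`: exchange the rows of the entries of `M`. -/
def lam (Z M : Symb) : Symb := ((Z.1 \ M.1) ∪ M.2, (Z.2 \ M.2) ∪ M.1)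

/-- `S̄_Z = {Λ_M : M ⊆ Z_I}`. -/
def Sbar (Z : Symb) : Set Symb := {Λ | ∃ M, SubZI M Z ∧ Λ = lam Z M}

/-- Size and inequality conditions of `B̄⁺_{Z,Z'}` in the case `m' = m`. -/
def Bm (Λ Λ' : Symb) : Prop :=
  Λ'.1.card = Λ.2.card ∧ Λ'.2.card + 1 = Λ.1.card ∧
  (∀ i, oRel (· > ·) (ent Λ.1 i) (ent Λ'.2 i)) ∧
  (∀ i, oRel (· ≥ ·) (ent Λ'.2 i) (ent Λ.1 (i + 1))) ∧
  (∀ i, oRel (· > ·) (ent Λ.2 i) (ent Λ'.1 (i + 1))) ∧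
  (∀ i, oRel (· ≥ ·) (ent Λ'.1 i) (ent Λ.2 i))

/-- Size and inequality conditions of `B̄⁺_{Z,Z'}` in the case `m' = m + 1`. -/
def Bm1 (Λ Λ' : Symb) : Prop :=
  Λ'.1.card = Λ.2.card + 1 ∧ Λ'.2.card = Λ.1.card ∧
  (∀ i, oRel (· ≥ ·) (ent Λ.1 i) (ent Λ'.2 i)) ∧
  (∀ i, oRel (· > ·) (ent Λ'.2 i) (ent Λ.1 (i + 1))) ∧
  (∀ i, oRel (· ≥ ·) (ent Λ.2 i) (ent Λ'.1 (i + 1))) ∧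
  (∀ i, oRel (· > ·) (ent Λ'.1 i) (ent Λ.2 i))

/-- The relation `B̄⁺_{Z,Z'}`. -/
def BbarPlus (Z Z' : Symb) (m m' : ℕ) (Λ Λ' : Symb) : Prop :=
  Λ ∈ Sbar Z ∧ Λ' ∈ Sbar Z' ∧
  ((m' = m ∧ Bm Λ Λ') ∨ (m' = m + 1 ∧ Bm1 Λ Λ'))

/-- The relation `D_{Z,Z'}`. -/
def DRel (Z Z' : Symb) (m m' : ℕ) (A A' : Symb) : Prop :=
  BbarPlus Z Z' m m' A A' ∧
  A.1.card = m + 1 ∧ A.2.card = m ∧ A'.1.card = m' ∧ A'.2.card = m'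

/-- `{c, d}` is a consecutive pair in `Z_I`. -/
def ConsecPair (Z : Symb) (c d : ℕ) : Prop :=
  c ∈ Z.1 \ Z.2 ∧ d ∈ Z.2 \ Z.1 ∧
  ∀ x ∈ (Z.1 \ Z.2) ∪ (Z.2 \ Z.1), ¬(min c d < x ∧ x < max c d)

/-!
The `i`-th entry of a row `S` is `x` exactly when `x ∈ S` and exactly `i` entries of `S` exceed
`x`. Counting the entries above a threshold therefore turns every interlacing condition into an
identity between counts at the entries of one row: for `m' = m`, `(Λ, Λ') ∈ B̄⁺` says that above
each entry of the second row of `Λ'` the first row of `Λ` has one entry more, and above each entry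
of the first row of `Λ'` the second row of `Λ` has as many; the case `m' = m + 1` is the same
relation with `Λ` and `Λ'` interchanged.

Moving entries between the rows preserves the total count above every threshold, while the two
rows of a special symbol (and the relevant rows of a pair in `B̄⁺`) have counts differing by at
most one; this forces `(Z, Z') ∈ D_{Z,Z'}` as soon as `D_{Z,Z'} ≠ ∅`. Exchanging the adjacent
entries `a`, `b` of `Z` changes the counts only at thresholds between `a` and `b`. For `m' = m`
the exchanged pair stays in `B̄⁺` iff no entry of `Z'` lies in that interval, and the only
candidates are the entries of `Z'` in the positions named in the statement; for `m' = m + 1` it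
is a condition on the counts of `Z'` at `a` and at `b` alone.
-/

def countAbove (S : Finset ℕ) (t : ℕ) : ℕ := (S.filter (t < ·)).card

section Counting

variable {S : Finset ℕ} {i t x y : ℕ}

lemma getElem?_eq_some_iff_of_pairwise_gt {L : List ℕ} (hL : L.Pairwise (· > ·)) {i x : ℕ} :
    L[i]? = some x ↔ x ∈ L ∧ L.countP (fun y => x < y) = i := by
  induction L generalizing i with
  | nil => simp
  | cons z L ih =>
    obtain ⟨hz, hL⟩ := List.pairwise_cons.1 hL
    have hcount : L.countP (fun y => x < y) = 0 ↔ ∀ y ∈ L, y ≤ x := by simp [List.countP_eq_zero]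
    cases i with
    | zero =>
      simp only [List.getElem?_cons_zero, Option.some.injEq, List.mem_cons, List.countP_cons]
      constructor
      · rintro rfl
        exact ⟨Or.inl rfl, by simp [hcount.2 fun y hy => (hz y hy).le]⟩
      · rintro ⟨rfl | hx, h⟩
        · rfl
        · simp [hz x hx] at h
    | succ i =>
      simp only [List.getElem?_cons_succ, ih hL, List.mem_cons, List.countP_cons]
      constructor
      · rintro ⟨hx, rfl⟩
        simp [hx, hz x hx]
      · rintro ⟨rfl | hx, h⟩
        · simp [hcount.2 fun y hy => (hz y hy).le] at h
        · simpa [hx, hz x hx] using h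

lemma countAbove_eq_countP_rowList (S : Finset ℕ) (t : ℕ) :
    countAbove S t = (rowList S).countP (fun y => t < y) := by
  rw [rowList, (List.reverse_perm _).countP_eq, (Finset.sort_perm_toList _ _).countP_eq,
    countAbove, Finset.card, Finset.filter_val, ← Multiset.countP_eq_card_filter,
    ← Finset.coe_toList S, Multiset.coe_countP]

lemma ent_eq_some_iff : ent S i = some x ↔ x ∈ S ∧ countAbove S x = i := by
  have hL : (rowList S).Pairwise (· > ·) := by
    rw [rowList, List.pairwise_reverse]
    exact (Finset.sortedLT_sort S).pairwise
  rw [ent, getElem?_eq_some_iff_of_pairwise_gt hL, rowList, List.mem_reverse, Finset.mem_sort,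
    countAbove_eq_countP_rowList, rowList]

lemma ent_countAbove (hx : x ∈ S) : ent S (countAbove S x) = some x :=
  ent_eq_some_iff.2 ⟨hx, rfl⟩

lemma exists_ent_of_lt_card (h : i < S.card) : ∃ x, ent S i = some x :=
  ⟨_, List.getElem?_eq_getElem (by rwa [rowList, List.length_reverse, Finset.length_sort])⟩

lemma ent_eq_none_iff : ent S i = none ↔ S.card ≤ i := by
  rw [ent, List.getElem?_eq_none_iff, rowList, List.length_reverse, Finset.length_sort]

lemma countAbove_le_card (S : Finset ℕ) (t : ℕ) : countAbove S t ≤ S.card :=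
  Finset.card_filter_le _ _

lemma countAbove_le_countAbove (S : Finset ℕ) (h : t ≤ y) : countAbove S y ≤ countAbove S t :=
  Finset.card_le_card (Finset.monotone_filter_right S fun _ _ hx => lt_of_le_of_lt h hx)

lemma countAbove_lt_countAbove (hx : x ∈ S) (h : t < x) : countAbove S x < countAbove S t :=
  Finset.card_lt_card <| (Finset.ssubset_iff_of_subset
    (Finset.monotone_filter_right S fun _ _ hy => h.trans hy)).2 ⟨x, by simp [hx, h]⟩

lemma countAbove_lt_card (hx : x ∈ S) : countAbove S x < S.card :=
  Finset.card_lt_card (Finset.filter_ssubset.2 ⟨x, hx, lt_irrefl x⟩)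

lemma lt_countAbove_iff (h : ent S i = some x) : i < countAbove S t ↔ t < x := by
  obtain ⟨hx, rfl⟩ := ent_eq_some_iff.1 h
  exact ⟨fun hlt => not_le.1 fun hle => (countAbove_le_countAbove S hle).not_gt hlt,
    countAbove_lt_countAbove hx⟩

lemma exists_ent_of_lt_countAbove (h : i < countAbove S t) : ∃ x, ent S i = some x ∧ t < x := by
  obtain ⟨x, hx⟩ := exists_ent_of_lt_card (h.trans_le (countAbove_le_card S t))
  exact ⟨x, hx, (lt_countAbove_iff hx).1 h⟩

end Counting

section Interlacing

variable {S T : Finset ℕ} {i x y : ℕ}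

lemma oRel.mono {r s : ℕ → ℕ → Prop} (hrs : ∀ x y, r x y → s x y) :
    ∀ {u v : Option ℕ}, oRel r u v → oRel s u v
  | some x, some y, h => hrs x y h
  | none, _, _ | some _, none, _ => trivial

lemma forall_mem_countAbove_eq_iff {P : ℕ → Prop} :
    (∀ y ∈ S, countAbove S y = i → P y) ↔ ∀ x, ent S i = some x → P x :=
  ⟨fun h x hx => h x (ent_eq_some_iff.1 hx).1 (ent_eq_some_iff.1 hx).2,
    fun h y hy hyi => h y (hyi ▸ ent_countAbove hy)⟩

lemma oRel_ent_left_iff {r : ℕ → ℕ → Prop} {v : Option ℕ} :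
    oRel r (ent S i) v ↔ ∀ x ∈ S, countAbove S x = i → oRel r (some x) v := by
  rw [forall_mem_countAbove_eq_iff]
  cases ent S i <;> simp [oRel]

lemma oRel_ent_right_iff {r : ℕ → ℕ → Prop} {u : Option ℕ} :
    oRel r u (ent S i) ↔ ∀ x ∈ S, countAbove S x = i → oRel r u (some x) := by
  rw [forall_mem_countAbove_eq_iff]
  cases ent S i <;> cases u <;> simp [oRel]

lemma oRel_ent_gt_iff (hi : i < S.card) : oRel (· > ·) (ent S i) (some x) ↔ i < countAbove S x := by
  obtain ⟨y, hy⟩ := exists_ent_of_lt_card hi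
  rw [hy, lt_countAbove_iff hy]
  rfl

lemma oRel_ge_ent_iff : oRel (· ≥ ·) (some x) (ent S i) ↔ countAbove S x ≤ i := by
  cases hy : ent S i with
  | none => exact iff_of_true trivial ((countAbove_le_card S x).trans (ent_eq_none_iff.1 hy))
  | some y =>
    show y ≤ x ↔ _
    rw [← not_lt, ← lt_countAbove_iff hy, not_lt]

lemma forall_oRel_ent_iff {r : ℕ → ℕ → Prop} (d : ℕ) :
    (∀ i, oRel r (ent S i) (ent T (i + d))) ↔
      ∀ x ∈ S, ∀ y ∈ T, countAbove T y = countAbove S x + d → r x y := by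
  simp only [oRel_ent_left_iff]
  simp only [oRel_ent_right_iff]
  exact ⟨fun h x hx y hy hxy => h _ x hx rfl y hy hxy,
    fun h i x hx hxi y hy hyi => h x hx y hy (by omega)⟩

lemma forall_oRel_ge_iff (d : ℕ) :
    (∀ i, oRel (· ≥ ·) (ent S i) (ent T (i + d))) ↔
      ∀ x ∈ S, countAbove T x ≤ countAbove S x + d := by
  rw [forall_oRel_ent_iff]
  refine ⟨fun h x hx => not_lt.1 fun hlt => ?_, fun h x hx y hy hxy => not_lt.1 fun hlt => ?_⟩
  · obtain ⟨y, hy, hxy⟩ := exists_ent_of_lt_countAbove hlt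
    exact (h x hx y (ent_eq_some_iff.1 hy).1 (ent_eq_some_iff.1 hy).2).not_gt hxy
  · have := countAbove_lt_countAbove hy hlt
    have := h x hx
    omega

lemma forall_oRel_gt_iff (d : ℕ) (hcard : T.card ≤ S.card + d) :
    (∀ i, oRel (· > ·) (ent S i) (ent T (i + d))) ↔
      ∀ y ∈ T, countAbove T y < countAbove S y + d := by
  rw [forall_oRel_ent_iff]
  refine ⟨fun h y hy => not_le.1 fun hle => ?_, fun h x hx y hy hxy => not_le.1 fun hle => ?_⟩
  · have := countAbove_lt_card hy
    obtain ⟨x, hx⟩ := exists_ent_of_lt_card (S := S) (i := countAbove T y - d) (by omega)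
    obtain ⟨hxS, hxi⟩ := ent_eq_some_iff.1 hx
    have := (lt_countAbove_iff hx).2 (h x hxS y hy (by omega))
    omega
  · have := countAbove_le_countAbove S hle
    have := h y hy
    omega

lemma countAbove_le_of_forall_oRel_ge {d : ℕ} (hcard : T.card ≤ S.card + d)
    (h : ∀ i, oRel (· ≥ ·) (ent S i) (ent T (i + d))) (t : ℕ) :
    countAbove T t ≤ countAbove S t + d := by
  by_contra! hlt
  obtain ⟨y, hy, hty⟩ := exists_ent_of_lt_countAbove hlt
  have := countAbove_le_card T t
  obtain ⟨x, hx⟩ := exists_ent_of_lt_card (S := S) (i := countAbove S t) (by omega)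
  have hyx : y ≤ x := by simpa [hx, hy, oRel] using h (countAbove S t)
  exact (lt_irrefl _) ((lt_countAbove_iff hx).2 (hty.trans_le hyx))

lemma mem_of_forall_oRel_ge {d : ℕ} (hcard : T.card ≤ S.card + d)
    (h : ∀ i, oRel (· ≥ ·) (ent S i) (ent T (i + d))) (hy : y ∈ T)
    (heq : countAbove T y = countAbove S y + d) : y ∈ S := by
  have := countAbove_lt_card hy
  obtain ⟨x, hx⟩ := exists_ent_of_lt_card (S := S) (i := countAbove S y) (by omega)
  have hyx : y ≤ x := by simpa [hx, ← heq, ent_countAbove hy, oRel] using h (countAbove S y)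
  have hxy : x ≤ y := not_lt.1 fun hlt => lt_irrefl _ ((lt_countAbove_iff hx).2 hlt)
  exact le_antisymm hxy hyx ▸ (ent_eq_some_iff.1 hx).1

end Interlacing

/-- A special symbol of defect `0` or `1`. -/
def IsSpecial (Z : Symb) : Prop :=
  Z.2.card ≤ Z.1.card ∧ Z.1.card ≤ Z.2.card + 1 ∧
  (∀ i, oRel (· ≥ ·) (ent Z.1 i) (ent Z.2 i)) ∧
  (∀ i, oRel (· ≥ ·) (ent Z.2 i) (ent Z.1 (i + 1)))

lemma IsSpecial1.isSpecial {Z : Symb} {m : ℕ} (h : IsSpecial1 Z m) : IsSpecial Z := by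
  obtain ⟨h1, h2, h⟩ := h
  exact ⟨by omega, by omega, h⟩

lemma IsSpecial0.isSpecial {Z : Symb} {m : ℕ} (h : IsSpecial0 Z m) : IsSpecial Z := by
  obtain ⟨h1, h2, h⟩ := h
  exact ⟨by omega, by omega, h⟩

namespace IsSpecial

variable {Z : Symb} {a b x : ℕ}

lemma countAbove_snd_le (hZ : IsSpecial Z) (t : ℕ) : countAbove Z.2 t ≤ countAbove Z.1 t :=
  countAbove_le_of_forall_oRel_ge (d := 0) hZ.1 hZ.2.2.1 t

lemma countAbove_fst_le (hZ : IsSpecial Z) (t : ℕ) : countAbove Z.1 t ≤ countAbove Z.2 t + 1 :=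
  countAbove_le_of_forall_oRel_ge hZ.2.1 hZ.2.2.2 t

lemma countAbove_eq_of_mem_fst (hZ : IsSpecial Z) (hx : x ∈ Z.1) (hx2 : x ∉ Z.2) :
    countAbove Z.1 x = countAbove Z.2 x := by
  have := hZ.countAbove_snd_le x
  have := hZ.countAbove_fst_le x
  have : countAbove Z.1 x ≠ countAbove Z.2 x + 1 := fun h =>
    hx2 (mem_of_forall_oRel_ge hZ.2.1 hZ.2.2.2 hx h)
  omega

lemma countAbove_eq_succ_of_mem_snd (hZ : IsSpecial Z) (hx : x ∈ Z.2) (hx1 : x ∉ Z.1) :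
    countAbove Z.1 x = countAbove Z.2 x + 1 := by
  have := hZ.countAbove_snd_le x
  have := hZ.countAbove_fst_le x
  have : countAbove Z.2 x ≠ countAbove Z.1 x := fun h =>
    hx1 (mem_of_forall_oRel_ge (d := 0) hZ.1 hZ.2.2.1 hx h)
  omega

lemma lt_of_countAbove_eq (hZ : IsSpecial Z) (ha : a ∈ Z.1) (hb : b ∈ Z.2) (hb1 : b ∉ Z.1)
    (h : countAbove Z.1 a = countAbove Z.2 b) : b < a := by
  refine lt_of_le_of_ne (not_lt.1 fun hab => ?_) fun hba => hb1 (hba ▸ ha)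
  have := countAbove_lt_countAbove hb hab
  have := hZ.countAbove_snd_le a
  omega

lemma lt_of_countAbove_eq_succ (hZ : IsSpecial Z) (ha : a ∈ Z.1) (hb1 : b ∉ Z.1)
    (h : countAbove Z.1 a = countAbove Z.2 b + 1) : a < b := by
  refine lt_of_le_of_ne (not_lt.1 fun hba => ?_) fun hab => hb1 (hab ▸ ha)
  have := countAbove_lt_countAbove ha hba
  have := hZ.countAbove_fst_le b
  omega

/-- The hypothesis `hab` says that `a` and `b` are the entries `a_k, b_k` or `a_k, b_{k-1}`. -/
lemma lt_iff_lt_of_adjacent (hZ : IsSpecial Z) (ha : a ∈ Z.1) (hb : b ∈ Z.2)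
    (hab : countAbove Z.1 a = countAbove Z.2 b ∨ countAbove Z.1 a = countAbove Z.2 b + 1)
    {t : ℕ} (ht : t ∈ Z.1 ∪ Z.2) (hta : t ≠ a) (htb : t ≠ b) : t < a ↔ t < b := by
  have := hZ.countAbove_fst_le b
  have := hZ.countAbove_snd_le a
  have := hZ.countAbove_fst_le t
  have := hZ.countAbove_snd_le t
  by_contra hne
  rcases (by omega : b < t ∧ t < a ∨ a < t ∧ t < b) with ⟨hbt, hlt⟩ | ⟨hat, hlt⟩
  · have := countAbove_lt_countAbove ha hlt
    rcases Finset.mem_union.1 ht with ht | ht <;>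
      (have := countAbove_lt_countAbove ht hbt; omega)
  · have := countAbove_lt_countAbove hb hlt
    rcases Finset.mem_union.1 ht with ht | ht <;>
      (have := countAbove_lt_countAbove ht hat; omega)

end IsSpecial

lemma bm_iff {Λ Λ' : Symb} :
    Bm Λ Λ' ↔ Λ'.1.card = Λ.2.card ∧ Λ'.2.card + 1 = Λ.1.card ∧
      (∀ t ∈ Λ'.2, countAbove Λ.1 t = countAbove Λ'.2 t + 1) ∧
      (∀ t ∈ Λ'.1, countAbove Λ.2 t = countAbove Λ'.1 t) := by
  refine ⟨fun ⟨hc1, hc2, h3, h4, h5, h6⟩ => ⟨hc1, hc2, fun t ht => ?_, fun t ht => ?_⟩,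
    fun ⟨hc1, hc2, h1, h2⟩ => ⟨hc1, hc2, ?_, ?_, ?_, ?_⟩⟩
  · have := (forall_oRel_gt_iff 0 (by omega)).1 h3 t ht
    have := (forall_oRel_ge_iff 1).1 h4 t ht
    omega
  · have := (forall_oRel_gt_iff 1 (by omega)).1 h5 t ht
    have := (forall_oRel_ge_iff 0).1 h6 t ht
    omega
  · exact (forall_oRel_gt_iff 0 (by omega)).2 fun t ht => by have := h1 t ht; omega
  · exact (forall_oRel_ge_iff 1).2 fun t ht => by have := h1 t ht; omega
  · exact (forall_oRel_gt_iff 1 (by omega)).2 fun t ht => by have := h2 t ht; omega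
  · exact (forall_oRel_ge_iff 0).2 fun t ht => by have := h2 t ht; omega

lemma bm1_iff_bm {Λ Λ' : Symb} : Bm1 Λ Λ' ↔ Bm Λ' Λ :=
  ⟨fun ⟨h1, h2, h3, h4, h5, h6⟩ => ⟨h2.symm, h1.symm, h6, h5, h4, h3⟩,
    fun ⟨h1, h2, h3, h4, h5, h6⟩ => ⟨h2.symm, h1.symm, h6, h5, h4, h3⟩⟩

lemma Bm.isSpecial_fst {Λ Λ' : Symb} (h : Bm Λ Λ') : IsSpecial (Λ.1, Λ'.2) :=
  ⟨(Nat.le_succ _).trans_eq h.2.1, h.2.1.ge,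
    fun i => (h.2.2.1 i).mono fun _ _ => le_of_lt, h.2.2.2.1⟩

lemma Bm.isSpecial_snd {Λ Λ' : Symb} (h : Bm Λ Λ') : IsSpecial (Λ'.1, Λ.2) :=
  ⟨h.1.ge, h.1.le.trans (Nat.le_succ _), h.2.2.2.2.2,
    fun i => (h.2.2.2.2.1 i).mono fun _ _ => le_of_lt⟩

section Exchange

variable {s u : Finset ℕ} {x y t : ℕ}

lemma countAbove_union (h : Disjoint s u) (t : ℕ) :
    countAbove (s ∪ u) t = countAbove s t + countAbove u t := by
  rw [countAbove, Finset.filter_union,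
    Finset.card_union_of_disjoint (Finset.disjoint_filter_filter h)]
  rfl

lemma countAbove_sdiff_add (h : u ⊆ s) (t : ℕ) :
    countAbove (s \ u) t + countAbove u t = countAbove s t := by
  rw [← countAbove_union Finset.sdiff_disjoint, Finset.sdiff_union_of_subset h]

lemma countAbove_singleton : countAbove {x} t = if t < x then 1 else 0 := by
  rw [countAbove, Finset.filter_singleton]
  split_ifs <;> rfl

lemma countAbove_exchange (hx : x ∈ s) (hy : y ∉ s) (t : ℕ) :
    countAbove (s \ {x} ∪ {y}) t + (if t < x then 1 else 0) =
      countAbove s t + (if t < y then 1 else 0) := by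
  have hd : Disjoint (s \ {x}) {y} := by simp [hy]
  rw [countAbove_union hd, ← countAbove_sdiff_add (Finset.singleton_subset_iff.2 hx) t,
    countAbove_singleton, countAbove_singleton]
  ring

lemma countAbove_exchange_eq_iff (hx : x ∈ s) (hy : y ∉ s) :
    countAbove (s \ {x} ∪ {y}) t = countAbove s t ↔ (t < x ↔ t < y) := by
  have := countAbove_exchange hx hy t
  split_ifs at this with htx hty hty <;>
    simp only [htx, hty, iff_true, iff_false, not_true_eq_false] <;> omega

lemma card_exchange (hx : x ∈ s) (hy : y ∉ s) : (s \ {x} ∪ {y}).card = s.card := by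
  have hd : Disjoint (s \ {x}) {y} := by simp [hy]
  rw [Finset.card_union_of_disjoint hd,
    Finset.card_sdiff_of_subset (Finset.singleton_subset_iff.2 hx), Finset.card_singleton,
    Finset.card_singleton, Nat.sub_add_cancel (Finset.card_pos.2 ⟨x, hx⟩)]

end Exchange

section Sbar

variable {Z M : Symb} {t : ℕ}

lemma countAbove_lam_add (hM : SubZI M Z) (t : ℕ) :
    countAbove (lam Z M).1 t + countAbove (lam Z M).2 t = countAbove Z.1 t + countAbove Z.2 t := by
  obtain ⟨h1, h2⟩ := hM
  have hd1 : Disjoint (Z.1 \ M.1) M.2 :=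
    Finset.disjoint_left.2 fun x hx hx2 => (Finset.mem_sdiff.1 (h2 hx2)).2 (Finset.mem_sdiff.1 hx).1
  have hd2 : Disjoint (Z.2 \ M.2) M.1 :=
    Finset.disjoint_left.2 fun x hx hx1 => (Finset.mem_sdiff.1 (h1 hx1)).2 (Finset.mem_sdiff.1 hx).1
  have := countAbove_sdiff_add (h1.trans Finset.sdiff_subset) t
  have := countAbove_sdiff_add (h2.trans Finset.sdiff_subset) t
  rw [lam, countAbove_union hd1, countAbove_union hd2]
  omega

lemma mem_lam_of_mem (hM : SubZI M Z) (ht : t ∈ Z.1 ∪ Z.2) : t ∈ (lam Z M).1 ∪ (lam Z M).2 := by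
  have := @hM.1 t
  have := @hM.2 t
  simp only [lam, Finset.mem_union, Finset.mem_sdiff] at *
  tauto

lemma mem_lam_of_mem_fst_of_mem_snd (hM : SubZI M Z) (h1 : t ∈ Z.1) (h2 : t ∈ Z.2) :
    t ∈ (lam Z M).1 ∧ t ∈ (lam Z M).2 := by
  have := @hM.1 t
  have := @hM.2 t
  simp only [lam, Finset.mem_union, Finset.mem_sdiff] at *
  tauto

lemma self_mem_Sbar (Z : Symb) : Z ∈ Sbar Z :=
  ⟨(∅, ∅), ⟨Finset.empty_subset _, Finset.empty_subset _⟩, by simp [lam]⟩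

end Sbar

lemma Bm.of_mem_Sbar {X Y A A' : Symb} (hX : IsSpecial X) (hY : IsSpecial Y) (hA : A ∈ Sbar X)
    (hA' : A' ∈ Sbar Y) (hc1 : Y.1.card = X.2.card) (hc2 : Y.2.card + 1 = X.1.card)
    (hB : Bm A A') : Bm X Y := by
  obtain ⟨M, hM, rfl⟩ := hA
  obtain ⟨M', hM', rfl⟩ := hA'
  obtain ⟨-, -, hB2, hB1⟩ := bm_iff.1 hB
  suffices key : ∀ t ∈ Y.1 ∪ Y.2, (t ∈ Y.2 → countAbove X.1 t = countAbove Y.2 t + 1) ∧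
      (t ∈ Y.1 → countAbove X.2 t = countAbove Y.1 t) from
    bm_iff.2 ⟨hc1, hc2, fun t ht => (key t (Finset.mem_union_right _ ht)).1 ht,
      fun t ht => (key t (Finset.mem_union_left _ ht)).2 ht⟩
  intro t ht
  have := countAbove_lam_add hM t
  have := countAbove_lam_add hM' t
  have := hX.countAbove_snd_le t
  have := hX.countAbove_fst_le t
  have := hY.countAbove_snd_le t
  have := hY.countAbove_fst_le t
  have : countAbove (lam Y M').2 t ≤ countAbove (lam X M).1 t :=
    hB.isSpecial_fst.countAbove_snd_le t
  have : countAbove (lam X M).1 t ≤ countAbove (lam Y M').2 t + 1 :=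
    hB.isSpecial_fst.countAbove_fst_le t
  have : countAbove (lam X M).2 t ≤ countAbove (lam Y M').1 t :=
    hB.isSpecial_snd.countAbove_snd_le t
  have : countAbove (lam Y M').1 t ≤ countAbove (lam X M).2 t + 1 :=
    hB.isSpecial_snd.countAbove_fst_le t
  have hrow := (Finset.mem_union.1 (mem_lam_of_mem hM' ht)).imp (hB1 t) (hB2 t)
  by_cases h1 : t ∈ Y.1 <;> by_cases h2 : t ∈ Y.2 <;>
    simp only [h1, h2, true_implies, false_implies, true_and, and_true]
  · obtain ⟨d1, d2⟩ := mem_lam_of_mem_fst_of_mem_snd hM' h1 h2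
    have := hB1 t d1
    have := hB2 t d2
    omega
  · have := hY.countAbove_eq_of_mem_fst h1 h2
    omega
  · have := hY.countAbove_eq_succ_of_mem_snd h2 h1
    omega

section DRel

variable {Z Z' Λ Λ' : Symb} {m m' : ℕ}

lemma dRel_iff (hΛ : Λ ∈ Sbar Z) (hΛ' : Λ' ∈ Sbar Z') (h1 : Λ.1.card = m + 1)
    (h2 : Λ.2.card = m) (h1' : Λ'.1.card = m') (h2' : Λ'.2.card = m') :
    DRel Z Z' m m' Λ Λ' ↔ (m' = m ∧ Bm Λ Λ') ∨ (m' = m + 1 ∧ Bm Λ' Λ) := by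
  simp only [DRel, BbarPlus, bm1_iff_bm, hΛ, hΛ', h1, h2, h1', h2', true_and, and_true]

lemma DRel.self (hZ : IsSpecial1 Z m) (hZ' : IsSpecial0 Z' m') (h : DRel Z Z' m m' Λ Λ') :
    DRel Z Z' m m' Z Z' := by
  obtain ⟨⟨hΛ, hΛ', hB⟩, -⟩ := h
  have ⟨hZ1, hZ2, _⟩ := hZ
  have ⟨hZ'1, hZ'2, _⟩ := hZ'
  rw [dRel_iff (self_mem_Sbar Z) (self_mem_Sbar Z') hZ1 hZ2 hZ'1 hZ'2]
  rw [bm1_iff_bm] at hB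
  rcases hB with ⟨rfl, hB⟩ | ⟨rfl, hB⟩
  · exact Or.inl ⟨rfl, hB.of_mem_Sbar hZ.isSpecial hZ'.isSpecial hΛ hΛ' (by omega) (by omega)⟩
  · exact Or.inr ⟨rfl, hB.of_mem_Sbar hZ'.isSpecial hZ.isSpecial hΛ' hΛ (by omega) (by omega)⟩

end DRel

section BmExchange

variable {X Y : Symb} {a b : ℕ}

lemma bm_lam_left_iff (hB : Bm X Y) (ha : a ∈ X.1) (ha2 : a ∉ X.2) (hb : b ∈ X.2)
    (hb1 : b ∉ X.1) : Bm (lam X ({a}, {b})) Y ↔ ∀ t ∈ Y.1 ∪ Y.2, (t < a ↔ t < b) := by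
  obtain ⟨hc1, hc2, hB2, hB1⟩ := bm_iff.1 hB
  have e1 (t : ℕ) : countAbove (lam X ({a}, {b})).1 t = countAbove X.1 t ↔ (t < a ↔ t < b) :=
    countAbove_exchange_eq_iff ha hb1
  have e2 (t : ℕ) : countAbove (lam X ({a}, {b})).2 t = countAbove X.2 t ↔ (t < a ↔ t < b) :=
    (countAbove_exchange_eq_iff hb ha2).trans Iff.comm
  rw [bm_iff]
  refine ⟨fun ⟨_, _, h2, h1⟩ t ht => ?_, fun h => ⟨hc1.trans (card_exchange hb ha2).symm,
    hc2.trans (card_exchange ha hb1).symm, fun t ht => ?_, fun t ht => ?_⟩⟩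
  · rcases Finset.mem_union.1 ht with ht | ht
    · exact (e2 t).1 ((h1 t ht).trans (hB1 t ht).symm)
    · exact (e1 t).1 (by rw [h2 t ht, hB2 t ht])
  · rw [(e1 t).2 (h t (Finset.mem_union_right _ ht)), hB2 t ht]
  · rw [(e2 t).2 (h t (Finset.mem_union_left _ ht)), hB1 t ht]

lemma bm_lam_right_iff (hB : Bm X Y) (ha : a ∈ Y.1) (ha2 : a ∉ Y.2) (hb : b ∈ Y.2)
    (hb1 : b ∉ Y.1) (hab : ∀ t ∈ Y.1 ∪ Y.2, t ≠ a → t ≠ b → (t < a ↔ t < b)) :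
    Bm X (lam Y ({a}, {b})) ↔
      countAbove X.1 a + (if a < b then 1 else 0) = countAbove Y.2 a + 1 ∧
      countAbove X.2 b + (if b < a then 1 else 0) = countAbove Y.1 b := by
  obtain ⟨hc1, hc2, hB2, hB1⟩ := bm_iff.1 hB
  have ea : countAbove (lam Y ({a}, {b})).2 a + (if a < b then 1 else 0) = countAbove Y.2 a := by
    have := countAbove_exchange hb ha2 a
    rwa [if_neg (lt_irrefl a), add_zero] at this
  have eb : countAbove (lam Y ({a}, {b})).1 b + (if b < a then 1 else 0) = countAbove Y.1 b := by
    have := countAbove_exchange ha hb1 b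
    rwa [if_neg (lt_irrefl b), add_zero] at this
  rw [bm_iff]
  refine ⟨fun ⟨_, _, h2, h1⟩ => ⟨?_, ?_⟩, fun ⟨ha', hb'⟩ => ⟨(card_exchange ha hb1).trans hc1,
    (card_exchange hb ha2).symm ▸ hc2, fun t ht => ?_, fun t ht => ?_⟩⟩
  · have := h2 a (by simp [lam])
    omega
  · have := h1 b (by simp [lam])
    omega
  · simp only [lam, Finset.mem_union, Finset.mem_sdiff, Finset.mem_singleton] at ht
    rcases ht with ⟨ht, htb⟩ | rfl
    · have hta : t ≠ a := by rintro rfl; exact ha2 ht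
      have : countAbove (lam Y ({a}, {b})).2 t = countAbove Y.2 t :=
        (countAbove_exchange_eq_iff hb ha2).2 (hab t (Finset.mem_union_right _ ht) hta htb).symm
      rw [this, hB2 t ht]
    · omega
  · simp only [lam, Finset.mem_union, Finset.mem_sdiff, Finset.mem_singleton] at ht
    rcases ht with ⟨ht, hta⟩ | rfl
    · have htb : t ≠ b := by rintro rfl; exact hb1 ht
      have : countAbove (lam Y ({a}, {b})).1 t = countAbove Y.1 t :=
        (countAbove_exchange_eq_iff ha hb1).2 (hab t (Finset.mem_union_left _ ht) hta htb)
      rw [this, hB1 t ht]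
    · omega

end BmExchange

section ConsecutivePair

variable {Z Z' : Symb} {a b i : ℕ}

lemma bm_lam_iff_of_countAbove_eq (hZ : IsSpecial Z) (hB : Bm Z Z') (ha : a ∈ Z.1)
    (ha2 : a ∉ Z.2) (hb : b ∈ Z.2) (hb1 : b ∉ Z.1) (hpa : countAbove Z.1 a = i)
    (hqb : countAbove Z.2 b = i) :
    Bm (lam Z ({a}, {b})) Z' ↔
      oRel (· ≥ ·) (ent Z'.1 i) (some a) ∧ oRel (· > ·) (some b) (ent Z'.2 i) := by
  obtain ⟨-, -, hB2, hB1⟩ := bm_iff.1 hB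
  have hba := hZ.lt_of_countAbove_eq ha hb hb1 (hpa.trans hqb.symm)
  have hIco (t : ℕ) (hbt : b ≤ t) (hta : t < a) :
      countAbove Z.1 t = i + 1 ∧ countAbove Z.2 t = i := by
    have := countAbove_lt_countAbove ha hta
    have := countAbove_le_countAbove Z.2 hbt
    have := hZ.countAbove_fst_le t
    omega
  rw [bm_lam_left_iff hB ha ha2 hb hb1, oRel_ent_left_iff, oRel_ent_right_iff]
  constructor
  · intro h
    refine ⟨fun x hx hxi => ?_, fun x hx hxi => ?_⟩
    · have hbx : b ≤ x := not_lt.1 fun hxb => by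
        have := countAbove_lt_countAbove hb hxb
        have := hB1 x hx
        omega
      exact not_lt.1 fun hxa => not_lt.2 hbx ((h x (Finset.mem_union_left _ hx)).1 hxa)
    · have hxa : x < a := not_le.1 fun hax => by
        have := countAbove_le_countAbove Z.1 hax
        have := hB2 x hx
        omega
      exact (h x (Finset.mem_union_right _ hx)).1 hxa
  · rintro ⟨h1, h2⟩ t ht
    by_contra hne
    obtain ⟨hbt, hta⟩ : b ≤ t ∧ t < a := by omega
    obtain ⟨hp, hq⟩ := hIco t hbt hta
    rcases Finset.mem_union.1 ht with ht | ht
    · have : t ≥ a := h1 t ht (by rw [← hB1 t ht, hq])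
      omega
    · have : b > t := h2 t ht (by have := hB2 t ht; omega)
      omega

lemma bm_lam_iff_of_countAbove_eq_succ (hZ : IsSpecial Z) (hB : Bm Z Z') (ha : a ∈ Z.1)
    (ha2 : a ∉ Z.2) (hb : b ∈ Z.2) (hb1 : b ∉ Z.1) (hpa : countAbove Z.1 a = i)
    (hqb : countAbove Z.2 b + 1 = i) :
    Bm (lam Z ({a}, {b})) Z' ↔
      oRel (· > ·) (some a) (ent Z'.1 i) ∧ oRel (· ≥ ·) (ent Z'.2 (i - 1)) (some b) := by
  obtain ⟨-, -, hB2, hB1⟩ := bm_iff.1 hB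
  have hab := hZ.lt_of_countAbove_eq_succ ha hb1 (hpa.trans hqb.symm)
  have hIco (t : ℕ) (hat : a ≤ t) (htb : t < b) :
      countAbove Z.1 t = i ∧ countAbove Z.2 t = i := by
    have := countAbove_le_countAbove Z.1 hat
    have := countAbove_lt_countAbove hb htb
    have := hZ.countAbove_snd_le t
    omega
  rw [bm_lam_left_iff hB ha ha2 hb hb1, oRel_ent_right_iff, oRel_ent_left_iff]
  constructor
  · intro h
    refine ⟨fun x hx hxi => ?_, fun x hx hxi => ?_⟩
    · have hxb : x < b := not_le.1 fun hbx => by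
        have := countAbove_le_countAbove Z.2 hbx
        have := hB1 x hx
        omega
      exact (h x (Finset.mem_union_left _ hx)).2 hxb
    · have hax : a ≤ x := not_lt.1 fun hxa => by
        have := countAbove_lt_countAbove ha hxa
        have := hB2 x hx
        omega
      exact not_lt.1 fun hxb => not_lt.2 hax ((h x (Finset.mem_union_right _ hx)).2 hxb)
  · rintro ⟨h1, h2⟩ t ht
    by_contra hne
    obtain ⟨hat, htb⟩ : a ≤ t ∧ t < b := by omega
    obtain ⟨hp, hq⟩ := hIco t hat htb
    rcases Finset.mem_union.1 ht with ht | ht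
    · have : a > t := h1 t ht (by rw [← hB1 t ht, hq])
      omega
    · have : t ≥ b := h2 t ht (by have := hB2 t ht; omega)
      omega

lemma bm_lam_right_iff_of_countAbove_eq (hZ : IsSpecial Z) (hZ' : IsSpecial Z') (hB : Bm Z' Z)
    (ha : a ∈ Z.1) (ha2 : a ∉ Z.2) (hb : b ∈ Z.2) (hb1 : b ∉ Z.1) (hpa : countAbove Z.1 a = i)
    (hqb : countAbove Z.2 b = i) :
    Bm Z' (lam Z ({a}, {b})) ↔
      oRel (· > ·) (ent Z'.1 i) (some a) ∧ oRel (· ≥ ·) (some b) (ent Z'.2 i) := by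
  obtain ⟨-, hc, hB2, hB1⟩ := bm_iff.1 hB
  have hba := hZ.lt_of_countAbove_eq ha hb hb1 (hpa.trans hqb.symm)
  have := countAbove_lt_card ha
  have := hZ.2.1
  rw [bm_lam_right_iff hB ha ha2 hb hb1 (fun t ht => hZ.lt_iff_lt_of_adjacent ha hb
    (Or.inl (hpa.trans hqb.symm)) ht), oRel_ent_gt_iff (by omega), oRel_ge_ent_iff,
    if_neg (not_lt.2 hba.le), if_pos hba]
  have := hZ.countAbove_eq_of_mem_fst ha ha2
  have := hZ.countAbove_eq_succ_of_mem_snd hb hb1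
  have := hB2 b hb
  have := hB1 a ha
  have := hZ'.countAbove_snd_le a
  have := hZ'.countAbove_fst_le a
  have := hZ'.countAbove_snd_le b
  have := hZ'.countAbove_fst_le b
  omega

lemma bm_lam_right_iff_of_countAbove_eq_succ (hZ : IsSpecial Z) (hZ' : IsSpecial Z')
    (hB : Bm Z' Z) (ha : a ∈ Z.1) (ha2 : a ∉ Z.2) (hb : b ∈ Z.2) (hb1 : b ∉ Z.1)
    (hpa : countAbove Z.1 a = i) (hqb : countAbove Z.2 b + 1 = i) :
    Bm Z' (lam Z ({a}, {b})) ↔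
      oRel (· ≥ ·) (some a) (ent Z'.1 i) ∧ oRel (· > ·) (ent Z'.2 (i - 1)) (some b) := by
  obtain ⟨hc, -, hB2, hB1⟩ := bm_iff.1 hB
  have hab := hZ.lt_of_countAbove_eq_succ ha hb1 (hpa.trans hqb.symm)
  have := countAbove_lt_card ha
  rw [bm_lam_right_iff hB ha ha2 hb hb1 (fun t ht => hZ.lt_iff_lt_of_adjacent ha hb
    (Or.inr (hpa.trans hqb.symm)) ht), oRel_ge_ent_iff, oRel_ent_gt_iff (by omega),
    if_pos hab, if_neg (not_lt.2 hab.le)]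
  have := hZ.countAbove_eq_of_mem_fst ha ha2
  have := hZ.countAbove_eq_succ_of_mem_snd hb hb1
  have := hB2 b hb
  have := hB1 a ha
  have := hZ'.countAbove_snd_le a
  have := hZ'.countAbove_fst_le a
  have := hZ'.countAbove_snd_le b
  have := hZ'.countAbove_fst_le b
  omega

end ConsecutivePair

theorem stmt1_general (m m' : ℕ) (Z Z' : Symb) (hm : m' = m ∨ m' = m + 1)
    (hZ : IsSpecial1 Z m) (hZ' : IsSpecial0 Z' m')
    (hD : ∃ A A' : Symb, DRel Z Z' m m' A A')
    (k l : ℕ) (hl : 1 ≤ l) (hkl : l = k ∨ l + 1 = k)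
    (a b : ℕ) (ha : ent Z.1 (k - 1) = some a) (hb : ent Z.2 (l - 1) = some b)
    (hcons : ConsecPair Z a b) :
    DRel Z Z' m m' (lam Z ({a}, {b})) Z' ↔
      ((m' = m ∧ l = k ∧
          oRel (· ≥ ·) (ent Z'.1 (k - 1)) (some a) ∧
          oRel (· > ·) (some b) (ent Z'.2 (k - 1))) ∨
       (m' = m ∧ l + 1 = k ∧
          oRel (· > ·) (some a) (ent Z'.1 (k - 1)) ∧
          oRel (· ≥ ·) (ent Z'.2 (l - 1)) (some b)) ∨
       (m' = m + 1 ∧ l = k ∧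
          oRel (· > ·) (ent Z'.1 (k - 1)) (some a) ∧
          oRel (· ≥ ·) (some b) (ent Z'.2 (k - 1))) ∨
       (m' = m + 1 ∧ l + 1 = k ∧
          oRel (· ≥ ·) (some a) (ent Z'.1 (k - 1)) ∧
          oRel (· > ·) (ent Z'.2 (l - 1)) (some b))) := by
  obtain ⟨haI, hbI, -⟩ := hcons
  obtain ⟨ha1, ha2⟩ := Finset.mem_sdiff.1 haI
  obtain ⟨hb2, hb1⟩ := Finset.mem_sdiff.1 hbI
  have hpa : countAbove Z.1 a = k - 1 := (ent_eq_some_iff.1 ha).2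
  have hqb : countAbove Z.2 b = l - 1 := (ent_eq_some_iff.1 hb).2
  have hΛ : lam Z ({a}, {b}) ∈ Sbar Z :=
    ⟨_, ⟨Finset.singleton_subset_iff.2 haI, Finset.singleton_subset_iff.2 hbI⟩, rfl⟩
  obtain ⟨A, A', hAA'⟩ := hD
  have hZZ' := hAA'.self hZ hZ'
  rw [dRel_iff (self_mem_Sbar Z) (self_mem_Sbar Z') hZ.1 hZ.2.1 hZ'.1 hZ'.2.1] at hZZ'
  rw [dRel_iff hΛ (self_mem_Sbar Z') ((card_exchange ha1 hb1).trans hZ.1)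
    ((card_exchange hb2 ha2).trans hZ.2.1) hZ'.1 hZ'.2.1]
  rcases hm with rfl | rfl <;> rcases hkl with rfl | rfl
  · have hB : Bm Z Z' := by simpa using hZZ'
    simpa using bm_lam_iff_of_countAbove_eq hZ.isSpecial hB ha1 ha2 hb2 hb1 hpa hqb
  · have hB : Bm Z Z' := by simpa using hZZ'
    simpa using bm_lam_iff_of_countAbove_eq_succ hZ.isSpecial hB ha1 ha2 hb2 hb1
      (by simpa using hpa) (by omega)
  · have hB : Bm Z' Z := by simpa using hZZ'
    simpa using bm_lam_right_iff_of_countAbove_eq hZ.isSpecial hZ'.isSpecial hB ha1 ha2 hb2 hb1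
      hpa hqb
  · have hB : Bm Z' Z := by simpa using hZZ'
    simpa using bm_lam_right_iff_of_countAbove_eq_succ hZ.isSpecial hZ'.isSpecial hB ha1 ha2 hb2
      hb1 (by simpa using hpa) (by omega)

theorem stmt1 (m m' : ℕ) (Z Z' : Symb) (hm : m' = m ∨ m' = m + 1)
    (hZ : IsSpecial1 Z m) (hZ' : IsSpecial0 Z' m')
    (hD : ∃ A A' : Symb, DRel Z Z' m m' A A')
    (k l : ℕ) (hk : 1 ≤ k) (hl : 1 ≤ l) (hkl : l = k ∨ l + 1 = k)
    (a b : ℕ) (ha : ent Z.1 (k - 1) = some a) (hb : ent Z.2 (l - 1) = some b)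
    (hcons : ConsecPair Z a b) :
    DRel Z Z' m m' (lam Z ({a}, {b})) Z' ↔
      ((m' = m ∧ l = k ∧
          oRel (· ≥ ·) (ent Z'.1 (k - 1)) (some a) ∧
          oRel (· > ·) (some b) (ent Z'.2 (k - 1))) ∨
       (m' = m ∧ l + 1 = k ∧
          oRel (· > ·) (some a) (ent Z'.1 (k - 1)) ∧
          oRel (· ≥ ·) (ent Z'.2 (l - 1)) (some b)) ∨
       (m' = m + 1 ∧ l = k ∧
          oRel (· > ·) (ent Z'.1 (k - 1)) (some a) ∧
          oRel (· ≥ ·) (some b) (ent Z'.2 (k - 1))) ∨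
       (m' = m + 1 ∧ l + 1 = k ∧
          oRel (· ≥ ·) (some a) (ent Z'.1 (k - 1)) ∧
          oRel (· > ·) (ent Z'.2 (l - 1)) (some b))) :=
  stmt1_general m m' Z Z' hm hZ hZ' hD k l hl hkl a b ha hb hcons
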